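/- arXiv:1705.10353 — 2 statements merged into one kernel-verified Lean document; each statement's English description precedes it below -/
import Mathlib

section
/- For a unit interval graph Γ_a on n vertices with area sequence a, the generating function over acyclic orientations weighted by number of ascending edges satisfies: the sum over all acyclic orientations θ of q^{asc(θ)} equals the product over i from 1 to n of the q-integer [a_i + 1]_q. -/
/-!
Induct on `n` by deleting the vertex `0`. The area condition makes `i + aᵢ` nondecreasing, so the
neighbours `1, …, a₀` of `0` form a clique, which an acyclic orientation of `Γ_a ∖ 0` orders
linearly. An orientation of `Γ_a` is its restriction to `Γ_a ∖ 0` together with the set `S` of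
neighbours `j` with `0 → j`. It is acyclic iff the restriction is and `S` is closed under
out-edges inside the clique: a cycle through `0` runs `0 → v ⇝ w → 0` with `v ∈ S`, `w ∉ S`, and
the clique edge between `v` and `w` either leaves `S` or closes a cycle avoiding `0`. Along a
linear order there is exactly one such `S` of each size `0, …, a₀`, which gives the factor
`[a₀ + 1]_q`.
-/
open Finset Polynomial

open scoped Classical

/-- The edge set of the unit interval graph `Γ_a` on vertices `Fin n` (0-indexed):
edges `i → j` for `i < j ≤ i + a i`. -/
def uigEdges (n : ℕ) (a : Fin n → ℕ) : Finset (Fin n × Fin n) :=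
  Finset.univ.filter (fun p => p.1 < p.2 ∧ (p.2 : ℕ) ≤ (p.1 : ℕ) + a p.1)

/-- The directed relation induced by the orientation of `Γ_a` whose set of ascending
edges is `A ⊆ uigEdges n a`. -/
def orientRel (n : ℕ) (a : Fin n → ℕ) (A : Finset (Fin n × Fin n))
    (u w : Fin n) : Prop :=
  (u, w) ∈ A ∨ ((w, u) ∈ uigEdges n a ∧ (w, u) ∉ A)

open Relation

section Relations

variable {α β : Type*} {r : α → α → Prop} {x y p : α}

def IsAcyclic (r : α → α → Prop) : Prop :=
  ∀ x, ¬ TransGen r x x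

def avoiding (r : α → α → Prop) (p : α) : α → α → Prop :=
  fun x y => r x y ∧ x ≠ p ∧ y ≠ p

theorem Relation.TransGen.avoiding_or_through (h : TransGen r x y) :
    TransGen (avoiding r p) x y ∨ ReflTransGen r x p ∧ ReflTransGen r p y := by
  induction h with
  | @single y hxy =>
    by_cases hx : x = p
    · subst hx; exact .inr ⟨.refl, .single hxy⟩
    by_cases hy : y = p
    · subst hy; exact .inr ⟨.single hxy, .refl⟩
    exact .inl (.single ⟨hxy, hx, hy⟩)
  | @tail y z hxy hyz ih =>
    rcases ih with ih | ⟨hxp, hpy⟩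
    · by_cases hz : z = p
      · subst hz; exact .inr ⟨(hxy.tail hyz).to_reflTransGen, .refl⟩
      by_cases hy : y = p
      · subst hy; exact .inr ⟨hxy.to_reflTransGen, .single hyz⟩
      exact .inl (ih.tail ⟨hyz, hy, hz⟩)
    · exact .inr ⟨hxp, hpy.tail hyz⟩

theorem Relation.TransGen.avoiding_or_through_self (h : TransGen r x x) :
    TransGen (avoiding r p) x x ∨ TransGen r p p := by
  rcases h.avoiding_or_through (p := p) with h' | ⟨hxp, hpx⟩
  · exact .inl h'
  rcases reflTransGen_iff_eq_or_transGen.1 hpx with rfl | hpx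
  · exact .inr h
  · exact .inr (hpx.trans_left hxp)

theorem Relation.ReflTransGen.exists_avoiding_last (h : ReflTransGen r x p) (hx : x ≠ p) :
    ∃ y, ReflTransGen (avoiding r p) x y ∧ r y p := by
  revert hx
  induction h using Relation.ReflTransGen.head_induction_on with
  | refl => exact fun hp => absurd rfl hp
  | @head x z hxz _ ih =>
    intro hx
    by_cases hz : z = p
    · subst hz; exact ⟨x, .refl, hxz⟩
    obtain ⟨y, hzy, hyp⟩ := ih hz
    exact ⟨y, hzy.head ⟨hxz, hx, hz⟩, hyp⟩

theorem Relation.ReflTransGen.of_map {s : β → β → Prop} {f : β → α} (hf : f.Injective)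
    (hrs : r ≤ Relation.Map s f f) {u w : β} (h : ReflTransGen r (f u) (f w)) :
    ReflTransGen s u w := by
  suffices ∀ y, ReflTransGen r (f u) y → ∃ w, f w = y ∧ ReflTransGen s u w by
    obtain ⟨w', hw', huw'⟩ := this _ h
    rwa [hf hw'] at huw'
  intro y hy
  induction hy with
  | refl => exact ⟨u, rfl, .refl⟩
  | tail _ hyz ih =>
    obtain ⟨w, rfl, huw⟩ := ih
    obtain ⟨w₁, w₂, hs, h₁, rfl⟩ := hrs _ _ hyz
    exact ⟨w₂, rfl, huw.tail (hf h₁ ▸ hs)⟩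

theorem IsAcyclic.exists_forall_not_rel (hr : IsAcyclic r) {T : Finset α}
    (hT : T.Nonempty) : ∃ w ∈ T, ∀ u ∈ T, ¬ r w u := by
  let succRel : T → T → Prop := fun u w => TransGen r w u
  have : IsTrans T succRel := ⟨fun _ _ _ h₁ h₂ => h₂.trans h₁⟩
  have : Std.Irrefl succRel := ⟨fun u => hr u⟩
  obtain ⟨w, -, hmin⟩ := (Finite.wellFounded_of_trans_of_irrefl succRel).has_min Set.univ
    ⟨⟨_, hT.choose_spec⟩, trivial⟩
  exact ⟨w, w.2, fun u hu h => hmin ⟨u, hu⟩ trivial (.single h)⟩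

def IsForwardClosed (r : α → α → Prop) (N S : Finset α) : Prop :=
  ∀ v ∈ S, ∀ w ∈ N, r v w → w ∈ S

variable {N S T : Finset α}

theorem IsForwardClosed.not_reflTransGen (hr : IsAcyclic r)
    (hN : IsChain r (N : Set α)) (hSN : S ⊆ N) (hS : IsForwardClosed r N S)
    {v w : α} (hv : v ∈ S) (hw : w ∈ N) (hwS : w ∉ S) : ¬ ReflTransGen r v w := by
  intro hvw
  rcases hN (hSN hv) hw (by rintro rfl; exact hwS hv) with h | h
  · exact hwS (hS v hv w hw h)
  · exact hr w (.head' h hvw)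

theorem IsForwardClosed.subset_or_subset (hN : IsChain r (N : Set α))
    (hSN : S ⊆ N) (hTN : T ⊆ N) (hS : IsForwardClosed r N S) (hT : IsForwardClosed r N T) :
    S ⊆ T ∨ T ⊆ S := by
  by_contra! h
  obtain ⟨v, hvS, hvT⟩ := Finset.not_subset.1 h.1
  obtain ⟨w, hwT, hwS⟩ := Finset.not_subset.1 h.2
  rcases hN (hSN hvS) (hTN hwT) (by rintro rfl; exact hvT hwT) with hvw | hwv
  · exact hwS (hS v hvS w (hTN hwT) hvw)
  · exact hvT (hT w hwT v (hSN hvS) hwv)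

theorem IsAcyclic.exists_isForwardClosed_card (hr : IsAcyclic r) {k : ℕ} (hk : k ≤ #N) :
    ∃ S ⊆ N, IsForwardClosed r N S ∧ #S = k := by
  induction k with
  | zero => exact ⟨∅, empty_subset _, fun v hv => absurd hv (notMem_empty v), card_empty⟩
  | succ k ih =>
    obtain ⟨S, hSN, hS, rfl⟩ := ih (by omega)
    obtain ⟨w, hw, hsink⟩ := hr.exists_forall_not_rel (T := N \ S)
      (sdiff_nonempty.2 fun h => by have := card_le_card h; omega)
    rw [mem_sdiff] at hw
    refine ⟨insert w S, insert_subset hw.1 hSN, ?_, card_insert_of_notMem hw.2⟩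
    intro v hv u hu hvu
    rw [mem_insert] at hv ⊢
    rcases hv with rfl | hv
    · by_contra! hu'
      exact hsink u (mem_sdiff.2 ⟨hu, hu'.2⟩) hvu
    · exact .inr (hS v hv u hu hvu)

theorem IsAcyclic.sum_isForwardClosed {M : Type*} [AddCommMonoid M] (hr : IsAcyclic r)
    (hN : IsChain r (N : Set α)) (f : ℕ → M) :
    ∑ S ∈ N.powerset.filter (IsForwardClosed r N), f #S = ∑ k ∈ range (#N + 1), f k := by
  have hinj : Set.InjOn card (N.powerset.filter (IsForwardClosed r N) : Set (Finset α)) := by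
    intro S hS T hT hST
    simp only [coe_filter, mem_powerset, Set.mem_ofPred_eq] at hS hT
    rcases hS.2.subset_or_subset hN hS.1 hT.1 hT.2 with h | h
    · exact eq_of_subset_of_card_le h hST.ge
    · exact (eq_of_subset_of_card_le h hST.le).symm
  have himage : (N.powerset.filter (IsForwardClosed r N)).image card = range (#N + 1) := by
    ext k
    simp only [mem_image, mem_filter, mem_powerset, mem_range, Nat.lt_succ_iff]
    constructor
    · rintro ⟨S, ⟨hSN, -⟩, rfl⟩
      exact card_le_card hSN
    · intro hk
      obtain ⟨S, hSN, hS, rfl⟩ := hr.exists_isForwardClosed_card hk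
      exact ⟨S, ⟨hSN, hS⟩, rfl⟩
  rw [← himage, sum_image hinj]

end Relations

theorem mem_uigEdges {n : ℕ} {a : Fin n → ℕ} {p : Fin n × Fin n} :
    p ∈ uigEdges n a ↔ p.1 < p.2 ∧ (p.2 : ℕ) ≤ p.1 + a p.1 := by
  simp [uigEdges]

theorem orientRel_or_orientRel_swap {n : ℕ} {a : Fin n → ℕ} (A : Finset (Fin n × Fin n))
    {u w : Fin n} (h : (u, w) ∈ uigEdges n a) : orientRel n a A u w ∨ orientRel n a A w u := by
  by_cases hA : (u, w) ∈ A
  · exact .inl (.inl hA)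
  · exact .inr (.inr ⟨h, hA⟩)

noncomputable def acyclicOrientations (n : ℕ) (a : Fin n → ℕ) :
    Finset (Finset (Fin n × Fin n)) :=
  (uigEdges n a).powerset.filter fun A => ∀ x, ¬ TransGen (orientRel n a A) x x

theorem mem_acyclicOrientations {n : ℕ} {a : Fin n → ℕ} {A : Finset (Fin n × Fin n)} :
    A ∈ acyclicOrientations n a ↔ A ⊆ uigEdges n a ∧ IsAcyclic (orientRel n a A) := by
  rw [acyclicOrientations, mem_filter, mem_powerset, IsAcyclic]

section Splitting

variable {n : ℕ} {a : Fin (n + 1) → ℕ}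

theorem monotone_val_add (harea : ∀ i j : Fin (n + 1), (i : ℕ) + 1 = j → a i ≤ a j + 1) :
    Monotone fun i : Fin (n + 1) => (i : ℕ) + a i := by
  refine Fin.monotone_iff_le_succ.2 fun i => ?_
  have := harea i.castSucc i.succ (by simp)
  simp only [Fin.val_castSucc, Fin.val_succ]
  omega

/-- The neighbours of `0` in `Γ_a`, shifted down to `Fin n`. -/
def zeroNbhd (a : Fin (n + 1) → ℕ) : Finset (Fin n) :=
  univ.filter fun j => (j : ℕ) < a 0

theorem card_zeroNbhd (h : a 0 ≤ n) : #(zeroNbhd a) = a 0 := by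
  rw [zeroNbhd, Fin.card_filter_val_lt, min_eq_right h]

theorem zero_succ_mem_uigEdges {j : Fin n} :
    ((0 : Fin (n + 1)), j.succ) ∈ uigEdges (n + 1) a ↔ j ∈ zeroNbhd a := by
  simp [mem_uigEdges, zeroNbhd, Fin.lt_def]

theorem succ_succ_mem_uigEdges {u w : Fin n} :
    (u.succ, w.succ) ∈ uigEdges (n + 1) a ↔ (u, w) ∈ uigEdges n (Fin.tail a) := by
  simp only [mem_uigEdges, Fin.succ_lt_succ_iff, Fin.val_succ, Fin.tail]
  omega

theorem mk_zero_notMem_uigEdges {x : Fin (n + 1)} : (x, 0) ∉ uigEdges (n + 1) a := by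
  simp [mem_uigEdges]

theorem mem_uigEdges_tail_of_mem_zeroNbhd
    (harea : ∀ i j : Fin (n + 1), (i : ℕ) + 1 = j → a i ≤ a j + 1) {v w : Fin n}
    (hvw : v < w) (hw : w ∈ zeroNbhd a) : (v, w) ∈ uigEdges n (Fin.tail a) := by
  have := monotone_val_add harea (Fin.zero_le v.succ)
  simp only [zeroNbhd, mem_filter, mem_univ, true_and] at hw
  simp only [Fin.val_zero, Fin.val_succ] at this
  simp only [mem_uigEdges, Fin.tail, hvw, true_and]
  omega

theorem isChain_orientRel_zeroNbhd
    (harea : ∀ i j : Fin (n + 1), (i : ℕ) + 1 = j → a i ≤ a j + 1)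
    (B : Finset (Fin n × Fin n)) : IsChain (orientRel n (Fin.tail a) B) (zeroNbhd a : Set (Fin n)) := by
  intro v hv w hw hvw
  rcases hvw.lt_or_gt with h | h
  · exact orientRel_or_orientRel_swap B (mem_uigEdges_tail_of_mem_zeroNbhd harea h hw)
  · exact (orientRel_or_orientRel_swap B (mem_uigEdges_tail_of_mem_zeroNbhd harea h hv)).symm

def tailEdges (A : Finset (Fin (n + 1) × Fin (n + 1))) : Finset (Fin n × Fin n) :=
  univ.filter fun p => (p.1.succ, p.2.succ) ∈ A

def zeroEdges (A : Finset (Fin (n + 1) × Fin (n + 1))) : Finset (Fin n) :=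
  univ.filter fun j => ((0 : Fin (n + 1)), j.succ) ∈ A

def glueEdges (B : Finset (Fin n × Fin n)) (S : Finset (Fin n)) :
    Finset (Fin (n + 1) × Fin (n + 1)) :=
  B.map ((Fin.succEmb n).prodMap (Fin.succEmb n)) ∪
    S.map ((Fin.succEmb n).trans (Function.Embedding.sectR 0 _))

variable {A : Finset (Fin (n + 1) × Fin (n + 1))} {B : Finset (Fin n × Fin n)}
  {S : Finset (Fin n)}

@[simp] theorem mem_tailEdges {p : Fin n × Fin n} :
    p ∈ tailEdges A ↔ (p.1.succ, p.2.succ) ∈ A := by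
  simp [tailEdges]

@[simp] theorem mem_zeroEdges {j : Fin n} :
    j ∈ zeroEdges A ↔ ((0 : Fin (n + 1)), j.succ) ∈ A := by
  simp [zeroEdges]

@[simp] theorem succ_succ_mem_glueEdges {u w : Fin n} :
    (u.succ, w.succ) ∈ glueEdges B S ↔ (u, w) ∈ B := by
  simp [glueEdges, (Fin.succ_ne_zero _).symm]

@[simp] theorem zero_succ_mem_glueEdges {j : Fin n} :
    ((0 : Fin (n + 1)), j.succ) ∈ glueEdges B S ↔ j ∈ S := by
  simp [glueEdges]

@[simp] theorem mk_zero_notMem_glueEdges {x : Fin (n + 1)} : (x, 0) ∉ glueEdges B S := by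
  simp [glueEdges]

theorem tailEdges_glueEdges : tailEdges (glueEdges B S) = B := by
  ext; simp

theorem zeroEdges_glueEdges : zeroEdges (glueEdges B S) = S := by
  ext; simp

theorem glueEdges_tailEdges_zeroEdges (hA : A ⊆ uigEdges (n + 1) a) :
    glueEdges (tailEdges A) (zeroEdges A) = A := by
  ext ⟨x, y⟩
  cases y using Fin.cases with
  | zero => simpa using fun h => mk_zero_notMem_uigEdges (hA h)
  | succ y => cases x using Fin.cases <;> simp

theorem tailEdges_subset (hA : A ⊆ uigEdges (n + 1) a) :
    tailEdges A ⊆ uigEdges n (Fin.tail a) :=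
  fun _ hp => succ_succ_mem_uigEdges.1 (hA (mem_tailEdges.1 hp))

theorem zeroEdges_subset (hA : A ⊆ uigEdges (n + 1) a) : zeroEdges A ⊆ zeroNbhd a :=
  fun _ hj => zero_succ_mem_uigEdges.1 (hA (mem_zeroEdges.1 hj))

theorem glueEdges_subset (hB : B ⊆ uigEdges n (Fin.tail a)) (hS : S ⊆ zeroNbhd a) :
    glueEdges B S ⊆ uigEdges (n + 1) a := by
  rintro ⟨x, y⟩ h
  cases y using Fin.cases with
  | zero => exact absurd h mk_zero_notMem_glueEdges
  | succ y =>
    cases x using Fin.cases with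
    | zero => exact zero_succ_mem_uigEdges.2 (hS (zero_succ_mem_glueEdges.1 h))
    | succ x => exact succ_succ_mem_uigEdges.2 (hB (succ_succ_mem_glueEdges.1 h))

theorem card_glueEdges : #(glueEdges B S) = #B + #S := by
  rw [glueEdges, card_union_of_disjoint, card_map, card_map]
  simp only [disjoint_left, mem_map]
  rintro _ ⟨q, -, rfl⟩ ⟨j, -, h⟩
  simpa [eq_comm] using congrArg Prod.fst h

theorem orientRel_succ_succ {u w : Fin n} :
    orientRel (n + 1) a A u.succ w.succ ↔ orientRel n (Fin.tail a) (tailEdges A) u w := by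
  simp only [orientRel, mem_tailEdges, succ_succ_mem_uigEdges]

theorem orientRel_zero_left {x : Fin (n + 1)} :
    orientRel (n + 1) a A 0 x ↔ ((0 : Fin (n + 1)), x) ∈ A := by
  simp [orientRel, mk_zero_notMem_uigEdges]

theorem orientRel_zero_right (hA : A ⊆ uigEdges (n + 1) a) {x : Fin (n + 1)} :
    orientRel (n + 1) a A x 0 ↔
      ((0 : Fin (n + 1)), x) ∈ uigEdges (n + 1) a ∧ ((0 : Fin (n + 1)), x) ∉ A := by
  simp only [orientRel, or_iff_right fun h => mk_zero_notMem_uigEdges (hA h)]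

theorem avoiding_orientRel_zero_le_map :
    avoiding (orientRel (n + 1) a A) 0 ≤
      Relation.Map (orientRel n (Fin.tail a) (tailEdges A)) Fin.succ Fin.succ := by
  rintro x y ⟨hxy, hx, hy⟩
  obtain ⟨u, rfl⟩ := Fin.exists_succ_eq.2 hx
  obtain ⟨w, rfl⟩ := Fin.exists_succ_eq.2 hy
  exact ⟨u, w, orientRel_succ_succ.1 hxy, rfl, rfl⟩

theorem isAcyclic_orientRel_succ_iff (hA : A ⊆ uigEdges (n + 1) a)
    (harea : ∀ i j : Fin (n + 1), (i : ℕ) + 1 = j → a i ≤ a j + 1) :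
    IsAcyclic (orientRel (n + 1) a A) ↔ IsAcyclic (orientRel n (Fin.tail a) (tailEdges A)) ∧
      IsForwardClosed (orientRel n (Fin.tail a) (tailEdges A)) (zeroNbhd a) (zeroEdges A) := by
  constructor
  · intro hr
    refine ⟨fun u hu => hr u.succ (TransGen.lift _ (fun _ _ => orientRel_succ_succ.2) u u hu),
      fun v hv w hw hvw => by_contra fun hwS => hr 0 ?_⟩
    have h0v : orientRel (n + 1) a A 0 v.succ := orientRel_zero_left.2 (mem_zeroEdges.1 hv)
    have hw0 : orientRel (n + 1) a A w.succ 0 :=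
      (orientRel_zero_right hA).2 ⟨zero_succ_mem_uigEdges.2 hw, mt mem_zeroEdges.2 hwS⟩
    exact .head h0v (.tail (.single (orientRel_succ_succ.2 hvw)) hw0)
  rintro ⟨hs, hS⟩ x hx
  have hmap := avoiding_orientRel_zero_le_map (a := a) (A := A)
  rcases hx.avoiding_or_through_self (p := 0) with hx | h00
  · obtain ⟨y, hxy, hyx⟩ := TransGen.head'_iff.1 hx
    obtain ⟨u, w, huw, rfl, rfl⟩ := hmap _ _ hxy
    exact hs u (.head' huw (hyx.of_map (Fin.succ_injective n) hmap))
  obtain ⟨v, h0v, hv0⟩ := TransGen.head'_iff.1 h00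
  rw [orientRel_zero_left] at h0v
  obtain ⟨w, hvw, hw0⟩ := hv0.exists_avoiding_last (mem_uigEdges.1 (hA h0v)).1.ne'
  rw [orientRel_zero_right hA] at hw0
  obtain ⟨v, rfl⟩ := Fin.exists_succ_eq.2 (mem_uigEdges.1 (hA h0v)).1.ne'
  obtain ⟨w, rfl⟩ := Fin.exists_succ_eq.2 (mem_uigEdges.1 hw0.1).1.ne'
  exact hS.not_reflTransGen hs (isChain_orientRel_zeroNbhd harea _)
    (zeroEdges_subset hA) (mem_zeroEdges.2 h0v)
    (zero_succ_mem_uigEdges.1 hw0.1) (mt mem_zeroEdges.1 hw0.2)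
    (hvw.of_map (Fin.succ_injective n) hmap)

end Splitting

theorem sum_acyclicOrientations_succ {M : Type*} [AddCommMonoid M] {n : ℕ}
    {a : Fin (n + 1) → ℕ} (harea : ∀ i j : Fin (n + 1), (i : ℕ) + 1 = j → a i ≤ a j + 1)
    (f : ℕ → M) :
    ∑ A ∈ acyclicOrientations (n + 1) a, f #A =
      ∑ B ∈ acyclicOrientations n (Fin.tail a),
        ∑ S ∈ (zeroNbhd a).powerset.filter
          (IsForwardClosed (orientRel n (Fin.tail a) B) (zeroNbhd a)), f (#B + #S) := by
  rw [sum_sigma']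
  refine sum_bij' (fun A _ => ⟨tailEdges A, zeroEdges A⟩) (fun BS _ => glueEdges BS.1 BS.2)
    ?_ ?_ ?_ ?_ ?_
  · intro A hA
    obtain ⟨hAE, hAc⟩ := mem_acyclicOrientations.1 hA
    obtain ⟨hs, hS⟩ := (isAcyclic_orientRel_succ_iff hAE harea).1 hAc
    simp only [mem_sigma, mem_acyclicOrientations, mem_filter, mem_powerset]
    exact ⟨⟨tailEdges_subset hAE, hs⟩, zeroEdges_subset hAE, hS⟩
  · rintro ⟨B, S⟩ hBS
    simp only [mem_sigma, mem_acyclicOrientations, mem_filter, mem_powerset] at hBS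
    obtain ⟨⟨hBE, hB⟩, hSN, hS⟩ := hBS
    have hE := glueEdges_subset hBE hSN
    refine mem_acyclicOrientations.2 ⟨hE, (isAcyclic_orientRel_succ_iff hE harea).2 ?_⟩
    rw [tailEdges_glueEdges, zeroEdges_glueEdges]
    exact ⟨hB, hS⟩
  · intro A hA
    exact glueEdges_tailEdges_zeroEdges (mem_acyclicOrientations.1 hA).1
  · intro ⟨B, S⟩ _
    simp only [tailEdges_glueEdges, zeroEdges_glueEdges]
  · intro A hA
    rw [← card_glueEdges, glueEdges_tailEdges_zeroEdges (mem_acyclicOrientations.1 hA).1]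

theorem sum_acyclicOrientations {R : Type*} [CommSemiring R] {n : ℕ} {a : Fin n → ℕ}
    (harea₁ : ∀ i : Fin n, (i : ℕ) + a i < n)
    (harea₂ : ∀ i j : Fin n, (i : ℕ) + 1 = j → a i ≤ a j + 1) (q : R) :
    ∑ A ∈ acyclicOrientations n a, q ^ #A = ∏ i, ∑ k ∈ range (a i + 1), q ^ k := by
  induction n with
  | zero => simp [acyclicOrientations, uigEdges]
  | succ n ih =>
    have ha₀ : a 0 ≤ n := by simpa using harea₁ 0
    calc ∑ A ∈ acyclicOrientations (n + 1) a, q ^ #A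
        = ∑ B ∈ acyclicOrientations n (Fin.tail a),
            q ^ #B * ∑ k ∈ range (a 0 + 1), q ^ k := by
          rw [sum_acyclicOrientations_succ harea₂]
          refine sum_congr rfl fun B hB => ?_
          simp_rw [pow_add, ← mul_sum]
          rw [(mem_acyclicOrientations.1 hB).2.sum_isForwardClosed
            (isChain_orientRel_zeroNbhd harea₂ B) (q ^ ·), card_zeroNbhd ha₀]
      _ = ∏ i, ∑ k ∈ range (a i + 1), q ^ k := by
          rw [← sum_mul, ih (a := Fin.tail a)
            (fun i => by simpa [Fin.tail, add_right_comm] using harea₁ i.succ)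
            (fun i j h => harea₂ i.succ j.succ (by simpa using h)), Fin.prod_univ_succ, mul_comm]
          rfl

theorem acyclic_orientation_generating_function_general (n : ℕ) (a : Fin n → ℕ)
    (harea₁ : ∀ i : Fin n, (i : ℕ) + a i < n)
    (harea₂ : ∀ i j : Fin n, (i : ℕ) + 1 = (j : ℕ) → a i ≤ a j + 1) :
    ∑ A ∈ (uigEdges n a).powerset.filter
        (fun A => ∀ x : Fin n, ¬ Relation.TransGen (orientRel n a A) x x),
        (Polynomial.X : Polynomial ℚ) ^ A.card
      = ∏ i : Fin n, ∑ k ∈ Finset.range (a i + 1), (Polynomial.X : Polynomial ℚ) ^ k :=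
  sum_acyclicOrientations harea₁ harea₂ X

/-- the generating function of acyclic orientations (orientations are
encoded by their sets `A` of ascending edges, and `asc θ = |A|`) satisfies
`Σ_θ q^{asc θ} = Π_i [a i + 1]_q`. -/
theorem acyclic_orientation_generating_function (n : ℕ) (a : Fin n → ℕ)
    (harea₁ : ∀ i : Fin n, (i : ℕ) + a i < n)
    (harea₂ : ∀ i j : Fin n, (i : ℕ) + 1 = (j : ℕ) → a i ≤ a j + 1)
    (ha_last : ∀ i : Fin n, (i : ℕ) + 1 = n → a i = 0) :
    ∑ A ∈ (uigEdges n a).powerset.filter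
        (fun A => ∀ x : Fin n, ¬ Relation.TransGen (orientRel n a A) x x),
        (Polynomial.X : Polynomial ℚ) ^ A.card
      = ∏ i : Fin n, ∑ k ∈ Finset.range (a i + 1), (Polynomial.X : Polynomial ℚ) ^ k :=
  acyclic_orientation_generating_function_general n a harea₁ harea₂
end

section
/- There is a bijection between acyclic orientations of Γ_a and placements of n non-attacking rooks on the Ferrers board with row lengths r_i = a_i + i, which sends the number of ascending edges of the orientation in row i to the number of inversions of the rook placement in row i, for every row i. -/
open Finset

/-- The number of inversions of a rook placement `σ` in row `i` of the Ferrers board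
with row lengths `r i = a i + i + 1` (0-indexed): cells `(i,j)` of the board with no rook
on them or to their left in row `i` (i.e. `j < σ i`) and no rook above them in column `j`. -/
def rookInvRow (n : ℕ) (a : Fin n → ℕ) (σ : Equiv.Perm (Fin n)) (i : Fin n) : ℕ :=
  ((Finset.range (a i + (i : ℕ) + 1)).filter
    (fun j => j < (σ i : ℕ) ∧ ∀ i' : Fin n, i' < i → (σ i' : ℕ) ≠ j)).card

/-!
Both sides are encoded by their row statistics, and each encoding is a bijection onto the
tables `t` with `t i ≤ a i`. A rook placement is rebuilt from the top row down: the inversions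
of row `i` are the free columns left of its rook, so `t i` says which free column it takes.
An acyclic orientation is rebuilt from the last vertex up: the upper neighbours of `i` form a
clique, on which acyclicity makes the heads of the ascending edges out of `i` an up-set, fixed
by its size; conversely every table is realised by orienting along heights, inserting each
vertex `i` just below exactly `t i` of its upper neighbours.
-/

theorem exists_card_filter_le_eq (F : Finset ℕ) {t : ℕ} (ht : t ≤ #F) :
    ∃ p, #{x ∈ F | p ≤ x} = t := by
  induction F using Finset.induction_on_min generalizing t with
  | empty => exact ⟨0, by simp_all⟩
  | insert m s hm ih =>
    have hms : m ∉ s := fun h => (hm m h).false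
    rcases ht.eq_or_lt with rfl | hlt
    · exact ⟨0, by simp⟩
    rw [card_insert_of_notMem hms, Nat.lt_succ_iff] at hlt
    obtain ⟨p, hp⟩ := ih hlt
    refine ⟨max p (m + 1), ?_⟩
    rw [filter_insert, if_neg (by omega), ← hp]
    congr 1
    exact filter_congr fun x hx => by have := hm x hx; omega

theorem exists_injOn_card_filter_lt_eq {V : Type*} [LinearOrder V] (N : V → Finset V)
    (t : V → ℕ) (hN : ∀ v, ∀ k ∈ N v, v < k) (ht : ∀ v, t v ≤ #(N v)) (S : Finset V)
    (hS : ∀ v ∈ S, N v ⊆ S) :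
    ∃ h : V → ℕ, Set.InjOn h S ∧ ∀ v ∈ S, #{k ∈ N v | h v < h k} = t v := by
  induction S using Finset.induction_on_min with
  | empty => exact ⟨fun _ => 0, by simp, by simp⟩
  | insert m s hm ih =>
    have hNs : ∀ v ∈ insert m s, N v ⊆ s := by
      intro v hv k hk
      refine (mem_insert.mp (hS v hv hk)).resolve_left ?_
      rintro rfl
      rcases mem_insert.mp hv with rfl | hv
      · exact (hN _ _ hk).false
      · exact (hm v hv).not_gt (hN v _ hk)
    have hne : ∀ v ∈ insert m s, ∀ k ∈ N v, k ≠ m := fun v hv k hk hkm =>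
      (hm k (hNs v hv hk)).ne' hkm
    obtain ⟨h, hinj, hcount⟩ := ih fun v hv => hNs v (mem_insert_of_mem hv)
    have hinjm := hinj.mono (coe_subset.mpr (hNs m (mem_insert_self m s)))
    obtain ⟨p, hp⟩ := exists_card_filter_le_eq ((N m).image h) (t := t m)
      (by rw [card_image_of_injOn hinjm]; exact ht m)
    -- doubling the old heights makes room to put `m` just below exactly the old heights `≥ p`
    refine ⟨fun v => if v = m then 2 * p else 2 * h v + 1, ?_, ?_⟩
    · intro x hx y hy hxy
      simp only [coe_insert, Set.mem_insert_iff, mem_coe] at hx hy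
      dsimp only at hxy
      split_ifs at hxy with hxm hym hym
      · rw [hxm, hym]
      · omega
      · omega
      · exact hinj (hx.resolve_left hxm) (hy.resolve_left hym) (by omega)
    · intro v hv
      by_cases hvm : v = m
      · subst hvm
        rw [← hp, filter_image, card_image_of_injOn (hinjm.mono (filter_subset _ _))]
        congr 1
        refine filter_congr fun k hk => ?_
        simp only [if_pos, hne _ hv k hk, if_false]
        omega
      · have hvs := (mem_insert.mp hv).resolve_left hvm
        rw [← hcount v hvs]
        congr 1
        refine filter_congr fun k hk => ?_
        simp only [hvm, hne _ hv k hk, if_false]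
        omega

theorem count_notMem_add_card_filter_lt (F : Finset ℕ) (K : ℕ) :
    Nat.count (· ∉ F) K + #{x ∈ F | x < K} = K := by
  have hF : #{x ∈ F | x < K} = #{x ∈ range K | x ∈ F} := by
    congr 1; ext; simp [and_comm]
  rw [Nat.count_eq_card_filter_range, hF, add_comm, card_filter_add_card_filter_not, card_range]

theorem exists_injOn_count_notMem_image_eq {V : Type*} [LinearOrder V] (t : V → ℕ)
    (S : Finset V) :
    ∃ f : V → ℕ, Set.InjOn f S ∧
      ∀ v ∈ S, Nat.count (· ∉ {u ∈ S | u < v}.image f) (f v) = t v := by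
  induction S using Finset.induction_on_max with
  | empty => exact ⟨fun _ => 0, by simp, by simp⟩
  | insert M s hM ih =>
    obtain ⟨f, hinj, hcount⟩ := ih
    have hMs : M ∉ s := fun h => (hM M h).false
    have hinf : (Set.ofPred (· ∉ s.image f)).Infinite := (s.image f).finite_toSet.infinite_compl
    obtain ⟨g, hgM, hgs⟩ : ∃ g : V → ℕ, g M = Nat.nth (· ∉ s.image f) (t M) ∧
        ∀ u ∈ s, g u = f u :=
      ⟨Function.update f M _, Function.update_self .., fun u hu =>
        Function.update_of_ne (by rintro rfl; exact hMs hu) ..⟩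
    refine ⟨g, ?_, ?_⟩
    · rw [coe_insert, Set.injOn_insert (mod_cast hMs)]
      refine ⟨(hinj.congr fun u hu => (hgs u hu).symm), ?_⟩
      rintro ⟨u, hu, hgu⟩
      refine Nat.nth_mem_of_infinite hinf (t M) (mem_image.mpr ⟨u, hu, ?_⟩)
      rw [← hgM, ← hgu, hgs u hu]
    · intro v hv
      rcases mem_insert.mp hv with rfl | hv
      · have hlt : {u ∈ insert v s | u < v}.image g = s.image f := by
          rw [filter_insert, if_neg (lt_irrefl v), filter_true_of_mem hM]
          exact image_congr fun u hu => hgs u hu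
        rw [hlt, hgM, Nat.count_nth_of_infinite hinf]
      · have hlt : {u ∈ insert M s | u < v}.image g = {u ∈ s | u < v}.image f := by
          rw [filter_insert, if_neg (hM v hv).not_gt]
          exact image_congr fun u hu => hgs u (mem_filter.mp hu).1
        rw [hlt, hgs v hv, hcount v hv]

theorem exists_equiv_of_range_eq {α β γ : Type*} {f : α → γ} {g : β → γ}
    (hf : Function.Injective f) (hg : Function.Injective g) (h : Set.range f = Set.range g) :
    ∃ φ : α ≃ β, ∀ x, g (φ x) = f x :=
  ⟨(Equiv.ofInjective f hf).trans ((Equiv.setCongr h).trans (Equiv.ofInjective g hg).symm),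
    fun x => by simp [Equiv.apply_ofInjective_symm]⟩

theorem card_filter_fst_eq {α β : Type*} [DecidableEq α] [Fintype β] [DecidableEq β]
    (A : Finset (α × β)) (i : α) : #(A.filter (·.1 = i)) = #{k | (i, k) ∈ A} :=
  card_nbij' Prod.snd (fun k => (i, k))
    (by rintro ⟨j, k⟩ hp; obtain ⟨hp, rfl⟩ := mem_filter.mp hp; simpa using hp)
    (fun k hk => by simp_all) (by rintro ⟨j, k⟩ hp; simp_all) (fun k _ => rfl)

section Orientation

variable {n : ℕ} {a : Fin n → ℕ}

theorem monotone_add_of_area (harea₂ : ∀ i j : Fin n, (i : ℕ) + 1 = (j : ℕ) → a i ≤ a j + 1) :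
    Monotone fun i : Fin n => (i : ℕ) + a i := by
  intro i j hij
  obtain ⟨d, hd⟩ := Nat.exists_eq_add_of_le (Fin.le_def.mp hij)
  induction d generalizing j with
  | zero => rw [Fin.ext (hd.trans (add_zero _))]
  | succ d ih =>
    have hlt : (i : ℕ) + d < n := by omega
    have h₁ := ih (j := ⟨i + d, hlt⟩) (Fin.le_def.mpr (Nat.le_add_right _ _)) rfl
    have h₂ := harea₂ ⟨i + d, hlt⟩ j (by simp; omega)
    simp only at h₁ h₂ ⊢
    omega

def upperNeighbors (a : Fin n → ℕ) (i : Fin n) : Finset (Fin n) :=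
  {k | i < k ∧ (k : ℕ) ≤ i + a i}

theorem mem_uigEdges_s6 {i k : Fin n} : (i, k) ∈ uigEdges n a ↔ k ∈ upperNeighbors a i := by
  simp [uigEdges, upperNeighbors]

theorem card_upperNeighbors (harea₁ : ∀ i : Fin n, (i : ℕ) + a i < n) (i : Fin n) :
    #(upperNeighbors a i) = a i := by
  have : upperNeighbors a i = Ioc i ⟨i + a i, harea₁ i⟩ := by
    ext k; simp [upperNeighbors, Fin.le_def]
  rw [this, Fin.card_Ioc]
  simp

theorem card_filter_fst_le (harea₁ : ∀ i : Fin n, (i : ℕ) + a i < n)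
    {A : Finset (Fin n × Fin n)} (hA : A ⊆ uigEdges n a) (i : Fin n) :
    #(A.filter (·.1 = i)) ≤ a i := by
  rw [card_filter_fst_eq, ← card_upperNeighbors harea₁ i]
  exact card_le_card fun k hk => mem_uigEdges_s6.mp (hA (mem_filter.mp hk).2)

theorem orientRel_or_orientRel (A : Finset (Fin n × Fin n)) {u w : Fin n}
    (h : (u, w) ∈ uigEdges n a) : orientRel n a A u w ∨ orientRel n a A w u := by
  by_cases hA : (u, w) ∈ A
  · exact .inl (.inl hA)
  · exact .inr (.inr ⟨h, hA⟩)

/-- The upper neighbourhood of a vertex is a clique. -/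
theorem orientRel_or_orientRel_of_upperNeighbors (hr : Monotone fun i : Fin n => (i : ℕ) + a i)
    (A : Finset (Fin n × Fin n)) {i k k' : Fin n} (hk : k ∈ upperNeighbors a i)
    (hk' : k' ∈ upperNeighbors a i) (hne : k ≠ k') :
    orientRel n a A k k' ∨ orientRel n a A k' k := by
  simp only [upperNeighbors, mem_filter, mem_univ, true_and] at hk hk'
  rcases hne.lt_or_gt with hlt | hlt
  · refine orientRel_or_orientRel A (mem_uigEdges_s6.mpr ?_)
    have := hr hk.1.le
    simp only [upperNeighbors, mem_filter, mem_univ, true_and] at this ⊢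
    omega
  · refine (orientRel_or_orientRel A (mem_uigEdges_s6.mpr ?_)).symm
    have := hr hk'.1.le
    simp only [upperNeighbors, mem_filter, mem_univ, true_and] at this ⊢
    omega

theorem mem_of_orientRel {A : Finset (Fin n × Fin n)}
    (hacyc : ∀ x, ¬ Relation.TransGen (orientRel n a A) x x) {i k k' : Fin n}
    (hk : (i, k) ∈ A) (hk' : (i, k') ∈ uigEdges n a) (h : orientRel n a A k k') :
    (i, k') ∈ A := by
  by_contra hA
  exact hacyc i (.head (.inl hk) (.head h (.single (.inr ⟨hk', hA⟩))))

theorem row_eq_of_rows_gt_eq (hr : Monotone fun i : Fin n => (i : ℕ) + a i)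
    {A A' : Finset (Fin n × Fin n)} (hA : A ⊆ uigEdges n a) (hA' : A' ⊆ uigEdges n a)
    (hacyc : ∀ x, ¬ Relation.TransGen (orientRel n a A) x x)
    (hacyc' : ∀ x, ¬ Relation.TransGen (orientRel n a A') x x) {i : Fin n}
    (habove : ∀ j, i < j → ∀ k, (j, k) ∈ A ↔ (j, k) ∈ A')
    (hcard : #{k | (i, k) ∈ A} = #{k | (i, k) ∈ A'}) (k : Fin n) :
    (i, k) ∈ A ↔ (i, k) ∈ A' := by
  have hrel : ∀ {k k'}, k ∈ upperNeighbors a i → k' ∈ upperNeighbors a i →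
      (orientRel n a A k k' ↔ orientRel n a A' k k') := by
    intro k k' hk hk'
    simp only [upperNeighbors, mem_filter, mem_univ, true_and] at hk hk'
    simp only [orientRel, habove k hk.1, habove k' hk'.1]
  -- the ascending edges out of `i` form an up-set of the tournament on its upper neighbours
  have key : ∀ {k k'}, (i, k) ∈ A → (i, k') ∈ A' → (i, k') ∈ A ∨ (i, k) ∈ A' := by
    intro k k' hk hk'
    rcases eq_or_ne k k' with rfl | hne
    · exact .inl hk
    have hki := mem_uigEdges_s6.mp (hA hk)
    have hk'i := mem_uigEdges_s6.mp (hA' hk')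
    rcases orientRel_or_orientRel_of_upperNeighbors hr A hki hk'i hne with h | h
    · exact .inl (mem_of_orientRel hacyc hk (hA' hk') h)
    · exact .inr (mem_of_orientRel hacyc' hk' (hA hk) ((hrel hk'i hki).mp h))
  set U : Finset (Fin n) := {k | (i, k) ∈ A}
  set U' : Finset (Fin n) := {k | (i, k) ∈ A'}
  suffices U = U' by simpa [U, U'] using congrArg (k ∈ ·) this
  by_cases hsub : U ⊆ U'
  · exact eq_of_subset_of_card_le hsub hcard.ge
  obtain ⟨k, hk, hk'⟩ := not_subset.mp hsub
  simp only [U, U', mem_filter, mem_univ, true_and] at hk hk'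
  refine (eq_of_subset_of_card_le (fun k' hk'' => ?_) hcard.le).symm
  simp only [U, U', mem_filter, mem_univ, true_and] at hk'' ⊢
  exact (key hk hk'').resolve_right hk'

theorem eq_of_card_filter_fst_eq (hr : Monotone fun i : Fin n => (i : ℕ) + a i)
    {A A' : Finset (Fin n × Fin n)} (hA : A ⊆ uigEdges n a) (hA' : A' ⊆ uigEdges n a)
    (hacyc : ∀ x, ¬ Relation.TransGen (orientRel n a A) x x)
    (hacyc' : ∀ x, ¬ Relation.TransGen (orientRel n a A') x x)
    (h : ∀ i, #(A.filter (·.1 = i)) = #(A'.filter (·.1 = i))) : A = A' := by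
  have hrow : ∀ i k, (i, k) ∈ A ↔ (i, k) ∈ A' := by
    intro i
    induction i using WellFoundedGT.induction with
    | _ i ih =>
      refine row_eq_of_rows_gt_eq hr hA hA' hacyc hacyc' ih ?_
      simpa only [card_filter_fst_eq] using h i
  ext ⟨i, k⟩
  exact hrow i k

theorem lt_of_orientRel_heights {h : Fin n → ℕ} (hinj : Function.Injective h) {u w : Fin n}
    (huw : orientRel n a ((uigEdges n a).filter fun p => h p.1 < h p.2) u w) : h u < h w := by
  rcases huw with huw | ⟨hwu, hnot⟩
  · exact (mem_filter.mp huw).2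
  · have hne : w ≠ u := (mem_filter.mp hwu).2.1.ne
    exact lt_of_le_of_ne (not_lt.mp fun hlt => hnot (mem_filter.mpr ⟨hwu, hlt⟩))
      (hinj.ne hne.symm)

theorem acyclic_orientRel_heights {h : Fin n → ℕ} (hinj : Function.Injective h) (x : Fin n) :
    ¬ Relation.TransGen (orientRel n a ((uigEdges n a).filter fun p => h p.1 < h p.2)) x x := by
  intro hx
  have := Relation.TransGen.lift (p := (· < ·)) h (fun _ _ => lt_of_orientRel_heights hinj) x x hx
  rw [Relation.transGen_eq_self] at this
  exact lt_irrefl _ this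

theorem exists_acyclic_card_filter_fst_eq (harea₁ : ∀ i : Fin n, (i : ℕ) + a i < n)
    (t : Fin n → ℕ) (ht : ∀ i, t i ≤ a i) :
    ∃ A ⊆ uigEdges n a, (∀ x, ¬ Relation.TransGen (orientRel n a A) x x) ∧
      ∀ i, #(A.filter (·.1 = i)) = t i := by
  obtain ⟨h, hinj, hcount⟩ := exists_injOn_card_filter_lt_eq (upperNeighbors a) t
    (fun v k hk => (mem_filter.mp hk).2.1) (fun v => card_upperNeighbors harea₁ v ▸ ht v) univ
    (fun _ _ => subset_univ _)
  rw [coe_univ, Set.injOn_univ] at hinj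
  refine ⟨_, filter_subset _ _, acyclic_orientRel_heights hinj, fun i => ?_⟩
  rw [card_filter_fst_eq, ← hcount i (mem_univ i)]
  congr 1
  ext k
  simp [mem_uigEdges_s6, upperNeighbors]

end Orientation

section Rook

variable {n : ℕ} {a : Fin n → ℕ}

def colsAbove (f : Fin n → ℕ) (i : Fin n) : Finset ℕ :=
  ({i' | i' < i} : Finset (Fin n)).image f

theorem card_colsAbove_le (f : Fin n → ℕ) (i : Fin n) : #(colsAbove f i) ≤ i := by
  refine card_image_le.trans_eq ?_
  rw [filter_gt_eq_Iio, Fin.card_Iio]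

theorem rookInvRow_eq_count {σ : Equiv.Perm (Fin n)} {i : Fin n}
    (hσ : (σ i : ℕ) < a i + i + 1) :
    rookInvRow n a σ i = Nat.count (· ∉ colsAbove (fun i => σ i) i) (σ i) := by
  rw [Nat.count_eq_card_filter_range, rookInvRow]
  congr 1
  ext j
  simp only [colsAbove, mem_filter, mem_range, mem_image, mem_univ, true_and, not_exists,
    not_and]
  constructor
  · rintro ⟨-, hj, h⟩
    exact ⟨hj, h⟩
  · rintro ⟨hj, h⟩
    exact ⟨by omega, hj, h⟩

theorem notMem_colsAbove (σ : Equiv.Perm (Fin n)) (i : Fin n) :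
    (σ i : ℕ) ∉ colsAbove (fun i => σ i) i := by
  simp only [colsAbove, mem_image, mem_filter, mem_univ, true_and, not_exists, not_and]
  exact fun i' hi' h => hi'.ne (σ.injective (Fin.ext h))

theorem eq_of_rookInvRow_eq {σ τ : Equiv.Perm (Fin n)}
    (hσ : ∀ i : Fin n, (σ i : ℕ) < a i + i + 1)
    (hτ : ∀ i : Fin n, (τ i : ℕ) < a i + i + 1)
    (h : ∀ i, rookInvRow n a σ i = rookInvRow n a τ i) : σ = τ := by
  ext i : 1
  induction i using WellFoundedLT.induction with
  | _ i ih =>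
    have hcols : colsAbove (fun i => σ i) i = colsAbove (fun i => τ i) i :=
      image_congr fun i' hi' => by simp only [ih i' (mem_filter.mp hi').2]
    have hcount := h i
    rw [rookInvRow_eq_count (hσ i), rookInvRow_eq_count (hτ i), hcols] at hcount
    exact Fin.ext
      (Nat.count_injective (hcols ▸ notMem_colsAbove σ i) (notMem_colsAbove τ i) hcount)

theorem rookInvRow_le (hr : Monotone fun i : Fin n => (i : ℕ) + a i) {σ : Equiv.Perm (Fin n)}
    (hσ : ∀ i : Fin n, (σ i : ℕ) < a i + i + 1) (i : Fin n) :
    rookInvRow n a σ i ≤ a i := by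
  -- the `i` columns used above row `i` all lie below `a i + i + 1`, leaving `a i + 1` free ones
  have hC : #{x ∈ colsAbove (fun i => σ i) i | x < a i + i + 1} = i := by
    rw [filter_true_of_mem fun x hx => ?_]
    · rw [colsAbove, card_image_of_injective _ fun _ _ h => σ.injective (Fin.ext h),
        filter_gt_eq_Iio, Fin.card_Iio]
    · obtain ⟨i', hi', rfl⟩ := mem_image.mp hx
      have := hr (mem_filter.mp hi').2.le
      have := hσ i'
      simp only at *
      omega
  have hfree := count_notMem_add_card_filter_lt (colsAbove (fun i => σ i) i) (a i + i + 1)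
  have hsucc := Nat.count_monotone (fun x : ℕ => x ∉ colsAbove (fun i => σ i) i) (hσ i)
  rw [Nat.count_succ, if_pos (notMem_colsAbove σ i)] at hsucc
  rw [rookInvRow_eq_count (hσ i)]
  omega

theorem exists_rookInvRow_eq (harea₁ : ∀ i : Fin n, (i : ℕ) + a i < n) (t : Fin n → ℕ)
    (ht : ∀ i, t i ≤ a i) :
    ∃ σ : Equiv.Perm (Fin n), (∀ i : Fin n, (σ i : ℕ) < a i + i + 1) ∧
      ∀ i, rookInvRow n a σ i = t i := by
  obtain ⟨f, hinj, hcount⟩ := exists_injOn_count_notMem_image_eq t univ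
  rw [coe_univ, Set.injOn_univ] at hinj
  have hcount' : ∀ i, Nat.count (· ∉ colsAbove f i) (f i) = t i :=
    fun i => hcount i (mem_univ i)
  have hf : ∀ i, f i < a i + i + 1 := by
    intro i
    refine lt_of_not_ge fun hle => ?_
    have h₁ := count_notMem_add_card_filter_lt (colsAbove f i) (a i + i + 1)
    have h₂ := (card_filter_le (colsAbove f i) (· < a i + i + 1)).trans (card_colsAbove_le f i)
    have h₃ := Nat.count_monotone (fun x : ℕ => x ∉ colsAbove f i) hle
    have := ht i
    rw [hcount'] at h₃
    omega
  let σ : Equiv.Perm (Fin n) :=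
    Equiv.ofBijective (fun i => ⟨f i, by have := harea₁ i; have := hf i; omega⟩)
    (Finite.injective_iff_bijective.mp fun i j hij => hinj (congrArg Fin.val hij))
  refine ⟨σ, hf, fun i => ?_⟩
  rw [rookInvRow_eq_count (hf i)]
  exact hcount' i

end Rook

section Tables

variable {n : ℕ} {a : Fin n → ℕ}

abbrev AcyclicOrientation (n : ℕ) (a : Fin n → ℕ) : Type :=
  {A : Finset (Fin n × Fin n) // A ⊆ uigEdges n a ∧
    ∀ x : Fin n, ¬ Relation.TransGen (orientRel n a A) x x}

abbrev RookPlacement (n : ℕ) (a : Fin n → ℕ) : Type :=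
  {σ : Equiv.Perm (Fin n) // ∀ i : Fin n, (σ i : ℕ) < a i + (i : ℕ) + 1}

def AcyclicOrientation.ascTable (A : AcyclicOrientation n a) (i : Fin n) : ℕ :=
  #(A.1.filter (·.1 = i))

def RookPlacement.invTable (σ : RookPlacement n a) (i : Fin n) : ℕ :=
  rookInvRow n a σ.1 i

theorem AcyclicOrientation.ascTable_injective (hr : Monotone fun i : Fin n => (i : ℕ) + a i) :
    Function.Injective (ascTable (a := a)) := fun A A' h =>
  Subtype.ext (eq_of_card_filter_fst_eq hr A.2.1 A'.2.1 A.2.2 A'.2.2 (congrFun h))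

theorem RookPlacement.invTable_injective : Function.Injective (invTable (a := a)) :=
  fun σ τ h => Subtype.ext (eq_of_rookInvRow_eq σ.2 τ.2 (congrFun h))

theorem AcyclicOrientation.range_ascTable (harea₁ : ∀ i : Fin n, (i : ℕ) + a i < n) :
    Set.range (ascTable (a := a)) = {t | ∀ i, t i ≤ a i} := by
  ext t
  constructor
  · rintro ⟨A, rfl⟩
    exact card_filter_fst_le harea₁ A.2.1
  · intro ht
    obtain ⟨A, hA, hacyc, h⟩ := exists_acyclic_card_filter_fst_eq harea₁ t ht
    exact ⟨⟨A, hA, hacyc⟩, funext h⟩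

theorem RookPlacement.range_invTable (harea₁ : ∀ i : Fin n, (i : ℕ) + a i < n)
    (hr : Monotone fun i : Fin n => (i : ℕ) + a i) :
    Set.range (invTable (a := a)) = {t | ∀ i, t i ≤ a i} := by
  ext t
  constructor
  · rintro ⟨σ, rfl⟩
    exact rookInvRow_le hr σ.2
  · intro ht
    obtain ⟨σ, hσ, h⟩ := exists_rookInvRow_eq harea₁ t ht
    exact ⟨⟨σ, hσ⟩, funext h⟩

end Tables

/-- there is a bijection between acyclic orientations of `Γ_a` and rook
placements of `n` non-attacking rooks on the Ferrers board with row lengths `a_i + i`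
(1-indexed), sending the number of ascending edges in each row to the number of
inversions of the rook placement in that row. -/
theorem acyclic_orientations_equiv_rook_placements (n : ℕ) (a : Fin n → ℕ)
    (harea₁ : ∀ i : Fin n, (i : ℕ) + a i < n)
    (harea₂ : ∀ i j : Fin n, (i : ℕ) + 1 = (j : ℕ) → a i ≤ a j + 1) :
    ∃ φ : {A : Finset (Fin n × Fin n) // A ⊆ uigEdges n a ∧
            ∀ x : Fin n, ¬ Relation.TransGen (orientRel n a A) x x} ≃
          {σ : Equiv.Perm (Fin n) // ∀ i : Fin n, (σ i : ℕ) < a i + (i : ℕ) + 1},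
      ∀ (A : {A : Finset (Fin n × Fin n) // A ⊆ uigEdges n a ∧
            ∀ x : Fin n, ¬ Relation.TransGen (orientRel n a A) x x}) (i : Fin n),
        ((A : Finset (Fin n × Fin n)).filter (fun p => p.1 = i)).card
        = rookInvRow n a (φ A) i := by
  have hr := monotone_add_of_area harea₂
  obtain ⟨φ, hφ⟩ := exists_equiv_of_range_eq (AcyclicOrientation.ascTable_injective hr)
    RookPlacement.invTable_injective
    ((AcyclicOrientation.range_ascTable harea₁).trans
      (RookPlacement.range_invTable harea₁ hr).symm)
  exact ⟨φ, fun A i => (congrFun (hφ A) i).symm⟩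
end
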